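/- Let H : ℝ⁴×ℝ⁴ → ℝ be differentiable with q = (q_l,q_m), p = (p_l,p_m) ∈ ℝ⁴, let q_* ∈ ℝ², let R_cl, R_cm, K_c ∈ ℝ^{2×2}, D_l, D_m ∈ ℝ^{2×2}, R_2 = blockdiag(D_l,D_m), B = [0_{2×2}; I_2], and let Φ_l, Φ_m : ℝ² → ℝ be differentiable. Define z_l = q_l − q_* + x_cl, z_m = q_m − q_* + x_cm, u = −∇Φ_l(z_l) − ∇Φ_m(z_m), the augmented state ζ = (q,p,x_cl,x_cm) ∈ ℝ^{12}, and H_ζ(ζ) = H(q,p) + Φ_l(z_l) + Φ_m(z_m) + (1/2)x_cm^T K_c x_cm. Then the closed-loop vector field given by q̇ = ∇_p H, ṗ = −∇_q H − R_2 ∇_p H + Bu, ẋ_cl = −R_cl ∇Φ_l(z_l), ẋ_cm = −R_cm(∇Φ_m(z_m) + K_c x_cm) equals F_ζ ∇H_ζ(ζ) for every ζ, where F_ζ = [[0_{4×4}, I_4, 0_{4×2}, 0_{4×2}], [−I_4, −R_2, Γ, 0_{4×2}], [0_{2×4}, 0_{2×4}, −R_cl, 0_{2×2}], [0_{2×4},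 0_{2×4}, 0_{2×2}, −R_cm]] and Γ = [I_2; −I_2]. -/

import Mathlib

open Matrix

noncomputable section

abbrev I4 := Fin 2 ⊕ Fin 2
abbrev I8 := I4 ⊕ I4
/-- Index of the augmented 12-dimensional state `ζ = (q, p, x_cl, x_cm)`. -/
abbrev I12 := I8 ⊕ (Fin 2 ⊕ Fin 2)
abbrev E8 := EuclideanSpace ℝ I8
abbrev E12 := EuclideanSpace ℝ I12
abbrev E2 := EuclideanSpace ℝ (Fin 2)

/-- The `(q,p)` part of the augmented state. -/
def qp (ζ : E12) : E8 := WithLp.toLp 2 (fun j => ζ (Sum.inl j))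
def ql (ζ : E12) : Fin 2 → ℝ := fun i => ζ (Sum.inl (Sum.inl (Sum.inl i)))
def qmv (ζ : E12) : Fin 2 → ℝ := fun i => ζ (Sum.inl (Sum.inl (Sum.inr i)))
def xcl (ζ : E12) : Fin 2 → ℝ := fun i => ζ (Sum.inr (Sum.inl i))
def xcm (ζ : E12) : Fin 2 → ℝ := fun i => ζ (Sum.inr (Sum.inr i))

/-- `z_l = q_l − q_* + x_cl`. -/
def zl (qstar : Fin 2 → ℝ) (ζ : E12) : E2 := WithLp.toLp 2 (fun i => ql ζ i - qstar i + xcl ζ i)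
/-- `z_m = q_m − q_* + x_cm`. -/
def zm (qstar : Fin 2 → ℝ) (ζ : E12) : E2 := WithLp.toLp 2 (fun i => qmv ζ i - qstar i + xcm ζ i)

def R2 (Dl Dm : Matrix (Fin 2) (Fin 2) ℝ) : Matrix I4 I4 ℝ := Matrix.fromBlocks Dl 0 0 Dm
def Bmat : Matrix I4 (Fin 2) ℝ := Matrix.fromRows 0 1
def Gam : Matrix I4 (Fin 2) ℝ := Matrix.fromRows 1 (-1)

/-- The closed-loop matrix `F_ζ` of Proposition 2. -/
def Fzeta (Dl Dm Rcl Rcm : Matrix (Fin 2) (Fin 2) ℝ) : Matrix I12 I12 ℝ :=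
  Matrix.fromBlocks
    (Matrix.fromBlocks 0 1 (-1) (-(R2 Dl Dm)))
    (Matrix.fromBlocks 0 0 Gam 0)
    0
    (Matrix.fromBlocks (-Rcl) 0 0 (-Rcm))

/-- The augmented energy
`H_ζ(ζ) = H(q,p) + Φ_l(z_l) + Φ_m(z_m) + (1/2) x_cm^T K_c x_cm`. -/
def Hzeta (H : E8 → ℝ) (Φl Φm : E2 → ℝ) (Kc : Matrix (Fin 2) (Fin 2) ℝ)
    (qstar : Fin 2 → ℝ) (ζ : E12) : ℝ :=
  H (qp ζ) + Φl (zl qstar ζ) + Φm (zm qstar ζ) +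
    (1 / 2 : ℝ) * (xcm ζ ⬝ᵥ Kc.mulVec (xcm ζ))

/-- The saturated control law `u = −∇Φ_l(z_l) − ∇Φ_m(z_m)`. -/
def uSat (Φl Φm : E2 → ℝ) (qstar : Fin 2 → ℝ) (ζ : E12) : Fin 2 → ℝ := fun i =>
  -(gradient Φl (zl qstar ζ) i) - gradient Φm (zm qstar ζ) i

/-- The augmented closed-loop vector field:
`q̇ = ∇_p H`, `ṗ = −∇_q H − R_2 ∇_p H + B u`, `ẋ_cl = −R_cl ∇Φ_l(z_l)`,
`ẋ_cm = −R_cm (∇Φ_m(z_m) + K_c x_cm)`. -/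
def closedLoopField (H : E8 → ℝ) (Φl Φm : E2 → ℝ)
    (Dl Dm Rcl Rcm Kc : Matrix (Fin 2) (Fin 2) ℝ) (qstar : Fin 2 → ℝ)
    (ζ : E12) : I12 → ℝ := fun i =>
  match i with
  | Sum.inl (Sum.inl j) => gradient H (qp ζ) (Sum.inr j)
  | Sum.inl (Sum.inr j) => -(gradient H (qp ζ) (Sum.inl j))
      - ((R2 Dl Dm).mulVec fun k => gradient H (qp ζ) (Sum.inr k)) j
      + (Bmat.mulVec (uSat Φl Φm qstar ζ)) j
  | Sum.inr (Sum.inl i) => -(Rcl.mulVec fun k => gradient Φl (zl qstar ζ) k) i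
  | Sum.inr (Sum.inr i) =>
      -(Rcm.mulVec fun k => gradient Φm (zm qstar ζ) k + Kc.mulVec (xcm ζ) k) i


/-! ### Auxiliary definitions and lemmas -/

/-- Coordinate value of the gradient in Euclidean space. -/
lemma my_grad_apply {ι : Type*} [Fintype ι] [DecidableEq ι]
    (f : EuclideanSpace ℝ ι → ℝ) (x : EuclideanSpace ℝ ι) (i : ι) :
    gradient f x i = fderiv ℝ f x (EuclideanSpace.single i 1) := by
  have h : fderiv ℝ f x (EuclideanSpace.single i 1)
      = @inner ℝ _ _ (gradient f x) (EuclideanSpace.single i 1) := by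
    rw [gradient]
    simp
  rw [h, EuclideanSpace.inner_single_right]
  simp

/-- Projection onto the `(q,p)` part as a continuous linear map. -/
def myLqp : E12 →L[ℝ] E8 := LinearMap.toContinuousLinearMap
  { toFun := fun ζ => (WithLp.toLp 2 (fun j => ζ (Sum.inl j)) : E8)
    map_add' := fun _ _ => rfl
    map_smul' := fun _ _ => rfl }

/-- The linear part of `ζ ↦ z_l`. -/
def myLzl : E12 →L[ℝ] E2 := LinearMap.toContinuousLinearMap
  { toFun := fun ζ =>
      (WithLp.toLp 2 (fun i => ζ (Sum.inl (Sum.inl (Sum.inl i))) + ζ (Sum.inr (Sum.inl i))) : E2)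
    map_add' := fun x y => by
      ext i; simp only [PiLp.add_apply]; ring
    map_smul' := fun c x => by
      ext i; simp only [PiLp.smul_apply, smul_eq_mul, RingHom.id_apply]; ring }

/-- The linear part of `ζ ↦ z_m`. -/
def myLzm : E12 →L[ℝ] E2 := LinearMap.toContinuousLinearMap
  { toFun := fun ζ =>
      (WithLp.toLp 2 (fun i => ζ (Sum.inl (Sum.inl (Sum.inr i))) + ζ (Sum.inr (Sum.inr i))) : E2)
    map_add' := fun x y => by
      ext i; simp only [PiLp.add_apply]; ring
    map_smul' := fun c x => by
      ext i; simp only [PiLp.smul_apply, smul_eq_mul, RingHom.id_apply]; ring }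

/-- The `i`-th coordinate of `x_cm` as a continuous linear map. -/
def cmProj (i : Fin 2) : E12 →L[ℝ] ℝ := (EuclideanSpace.proj i).comp
  (LinearMap.toContinuousLinearMap
  { toFun := fun ζ => (WithLp.toLp 2 (fun i => ζ (Sum.inr (Sum.inr i))) : E2)
    map_add' := fun _ _ => rfl
    map_smul' := fun _ _ => rfl })

lemma cmProj_apply (i : Fin 2) (v : E12) : cmProj i v = v (Sum.inr (Sum.inr i)) := rfl

lemma myLqp_apply (v : E12) (j : I8) : myLqp v j = v (Sum.inl j) := rfl

lemma myLzl_apply (v : E12) (i : Fin 2) :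
    myLzl v i = v (Sum.inl (Sum.inl (Sum.inl i))) + v (Sum.inr (Sum.inl i)) := rfl

lemma myLzm_apply (v : E12) (i : Fin 2) :
    myLzm v i = v (Sum.inl (Sum.inl (Sum.inr i))) + v (Sum.inr (Sum.inr i)) := rfl

/-- Derivative of the quadratic term `(1/2) x_cm^T K_c x_cm`, for symmetric `K_c`. -/
lemma hasFDerivAt_quad (Kc : Matrix (Fin 2) (Fin 2) ℝ) (hKc : Kc.IsSymm) (ζ : E12) :
    HasFDerivAt (fun v : E12 => (1/2 : ℝ) * (xcm v ⬝ᵥ Kc.mulVec (xcm v)))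
      (∑ i, (Kc.mulVec (xcm ζ) i) • cmProj i) ζ := by
  have key : ∀ v : E12, (1/2 : ℝ) * (xcm v ⬝ᵥ Kc.mulVec (xcm v))
      = ∑ i, ∑ j, (1/2) * (cmProj i v * (Kc i j * cmProj j v)) := by
    intro v
    simp only [dotProduct, Matrix.mulVec, Finset.mul_sum, cmProj_apply, xcm]
    try congr 1
  simp only [key]
  have h : ∀ i j : Fin 2,
      HasFDerivAt (fun v : E12 => (1/2 : ℝ) * (cmProj i v * (Kc i j * cmProj j v)))
        ((1/2 : ℝ) • (cmProj i ζ • (Kc i j • cmProj j) + (Kc i j * cmProj j ζ) • cmProj i)) ζ :=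
    fun i j =>
      (((cmProj i).hasFDerivAt.mul (((cmProj j).hasFDerivAt).const_mul (Kc i j)))).const_mul (1/2)
  have hsum := HasFDerivAt.fun_sum (fun i (_ : i ∈ Finset.univ) =>
    HasFDerivAt.fun_sum (fun j (_ : j ∈ Finset.univ) => h i j))
  refine hsum.congr_fderiv ?_
  ext v
  simp only [ContinuousLinearMap.sum_apply, ContinuousLinearMap.smul_apply,
    ContinuousLinearMap.add_apply, Matrix.mulVec, dotProduct, smul_eq_mul]
  have hsym : ∀ a b, Kc a b = Kc b a := fun a b => (hKc.apply a b).symm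
  simp only [Fin.sum_univ_two, cmProj_apply, xcm]
  rw [hsym 0 1]
  ring

/-- Proposition 2(ii): the augmented closed-loop system admits the
port-Hamiltonian representation `ζ̇ = F_ζ ∇H_ζ(ζ)`.
(`K_c` is symmetric, as it is a positive definite gain in the paper.) -/
theorem closedLoop_saturated_pH (H : E8 → ℝ) (hH : Differentiable ℝ H)
    (Φl Φm : E2 → ℝ) (hΦl : Differentiable ℝ Φl) (hΦm : Differentiable ℝ Φm)
    (Dl Dm Rcl Rcm Kc : Matrix (Fin 2) (Fin 2) ℝ) (hKc : Kc.IsSymm)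
    (qstar : Fin 2 → ℝ) :
    ∀ ζ : E12,
      closedLoopField H Φl Φm Dl Dm Rcl Rcm Kc qstar ζ =
        (Fzeta Dl Dm Rcl Rcm).mulVec
          fun i => gradient (Hzeta H Φl Φm Kc qstar) ζ i := by
  intro ζ
  -- the constant offsets in z_l, z_m
  set c : E2 := (WithLp.toLp 2 (fun i => -qstar i) : E2) with hc
  have hzl : zl qstar = fun v => myLzl v + c := by
    funext v; ext i
    simp only [zl, ql, xcl, PiLp.add_apply, myLzl_apply, hc]
    ring
  have hzm : zm qstar = fun v => myLzm v + c := by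
    funext v; ext i
    simp only [zm, qmv, xcm, PiLp.add_apply, myLzm_apply, hc]
    ring
  -- the total derivative of Hzeta
  have h1 : HasFDerivAt (fun v : E12 => H (qp v)) ((fderiv ℝ H (qp ζ)).comp myLqp) ζ :=
    (hH (qp ζ)).hasFDerivAt.comp ζ (myLqp.hasFDerivAt : HasFDerivAt qp myLqp ζ)
  have h2 : HasFDerivAt (fun v : E12 => Φl (zl qstar v))
      ((fderiv ℝ Φl (zl qstar ζ)).comp myLzl) ζ := by
    rw [hzl]
    exact (hΦl _).hasFDerivAt.comp ζ (myLzl.hasFDerivAt.add_const c)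
  have h3 : HasFDerivAt (fun v : E12 => Φm (zm qstar v))
      ((fderiv ℝ Φm (zm qstar ζ)).comp myLzm) ζ := by
    rw [hzm]
    exact (hΦm _).hasFDerivAt.comp ζ (myLzm.hasFDerivAt.add_const c)
  have h4 := hasFDerivAt_quad Kc hKc ζ
  have hD : HasFDerivAt (Hzeta H Φl Φm Kc qstar)
      ((fderiv ℝ H (qp ζ)).comp myLqp + (fderiv ℝ Φl (zl qstar ζ)).comp myLzl
        + (fderiv ℝ Φm (zm qstar ζ)).comp myLzm
        + ∑ i, (Kc.mulVec (xcm ζ) i) • cmProj i) ζ :=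
    ((h1.add h2).add h3).add h4
  have hg : ∀ k : I12, gradient (Hzeta H Φl Φm Kc qstar) ζ k =
      fderiv ℝ H (qp ζ) (myLqp (EuclideanSpace.single k 1))
      + fderiv ℝ Φl (zl qstar ζ) (myLzl (EuclideanSpace.single k 1))
      + fderiv ℝ Φm (zm qstar ζ) (myLzm (EuclideanSpace.single k 1))
      + ∑ i, (Kc.mulVec (xcm ζ) i) * cmProj i (EuclideanSpace.single k 1) := by
    intro k
    rw [my_grad_apply, hD.fderiv]
    simp [ContinuousLinearMap.sum_apply]
  -- evaluation on each class of coordinates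
  have hql : ∀ j : Fin 2, gradient (Hzeta H Φl Φm Kc qstar) ζ (Sum.inl (Sum.inl (Sum.inl j)))
      = gradient H (qp ζ) (Sum.inl (Sum.inl j)) + gradient Φl (zl qstar ζ) j := by
    intro j
    rw [hg]
    have e1 : myLqp (EuclideanSpace.single (Sum.inl (Sum.inl (Sum.inl j))) 1)
        = EuclideanSpace.single (Sum.inl (Sum.inl j)) 1 := by
      ext m; simp [myLqp_apply, EuclideanSpace.single_apply]
    have e2 : myLzl (EuclideanSpace.single (Sum.inl (Sum.inl (Sum.inl j))) 1)
        = EuclideanSpace.single j 1 := by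
      ext m; simp [myLzl_apply, EuclideanSpace.single_apply]
    have e3 : myLzm (EuclideanSpace.single (Sum.inl (Sum.inl (Sum.inl j))) 1) = 0 := by
      ext m; simp [myLzm_apply, EuclideanSpace.single_apply]
    simp [e1, e2, e3, cmProj_apply, EuclideanSpace.single_apply,
      ← my_grad_apply]
  have hqm : ∀ j : Fin 2, gradient (Hzeta H Φl Φm Kc qstar) ζ (Sum.inl (Sum.inl (Sum.inr j)))
      = gradient H (qp ζ) (Sum.inl (Sum.inr j)) + gradient Φm (zm qstar ζ) j := by
    intro j
    rw [hg]
    have e1 : myLqp (EuclideanSpace.single (Sum.inl (Sum.inl (Sum.inr j))) 1)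
        = EuclideanSpace.single (Sum.inl (Sum.inr j)) 1 := by
      ext m; simp [myLqp_apply, EuclideanSpace.single_apply]
    have e2 : myLzl (EuclideanSpace.single (Sum.inl (Sum.inl (Sum.inr j))) 1) = 0 := by
      ext m; simp [myLzl_apply, EuclideanSpace.single_apply]
    have e3 : myLzm (EuclideanSpace.single (Sum.inl (Sum.inl (Sum.inr j))) 1)
        = EuclideanSpace.single j 1 := by
      ext m; simp [myLzm_apply, EuclideanSpace.single_apply]
    simp [e1, e2, e3, cmProj_apply, EuclideanSpace.single_apply,
      ← my_grad_apply]
  have hp : ∀ j : I4, gradient (Hzeta H Φl Φm Kc qstar) ζ (Sum.inl (Sum.inr j))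
      = gradient H (qp ζ) (Sum.inr j) := by
    intro j
    rw [hg]
    have e1 : myLqp (EuclideanSpace.single (Sum.inl (Sum.inr j)) 1)
        = EuclideanSpace.single (Sum.inr j) 1 := by
      ext m; simp [myLqp_apply, EuclideanSpace.single_apply]
    have e2 : myLzl (EuclideanSpace.single (Sum.inl (Sum.inr j)) 1) = 0 := by
      ext m; simp [myLzl_apply, EuclideanSpace.single_apply]
    have e3 : myLzm (EuclideanSpace.single (Sum.inl (Sum.inr j)) 1) = 0 := by
      ext m; simp [myLzm_apply, EuclideanSpace.single_apply]
    simp [e1, e2, e3, cmProj_apply, EuclideanSpace.single_apply,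
      ← my_grad_apply]
  have hxl : ∀ j : Fin 2, gradient (Hzeta H Φl Φm Kc qstar) ζ (Sum.inr (Sum.inl j))
      = gradient Φl (zl qstar ζ) j := by
    intro j
    rw [hg]
    have e1 : myLqp (EuclideanSpace.single (Sum.inr (Sum.inl j)) 1) = 0 := by
      ext m; simp [myLqp_apply, EuclideanSpace.single_apply]
    have e2 : myLzl (EuclideanSpace.single (Sum.inr (Sum.inl j)) 1)
        = EuclideanSpace.single j 1 := by
      ext m; simp [myLzl_apply, EuclideanSpace.single_apply]
    have e3 : myLzm (EuclideanSpace.single (Sum.inr (Sum.inl j)) 1) = 0 := by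
      ext m; simp [myLzm_apply, EuclideanSpace.single_apply]
    simp [e1, e2, e3, cmProj_apply, EuclideanSpace.single_apply,
      ← my_grad_apply]
  have hxm : ∀ j : Fin 2, gradient (Hzeta H Φl Φm Kc qstar) ζ (Sum.inr (Sum.inr j))
      = gradient Φm (zm qstar ζ) j + Kc.mulVec (xcm ζ) j := by
    intro j
    rw [hg]
    have e1 : myLqp (EuclideanSpace.single (Sum.inr (Sum.inr j)) 1) = 0 := by
      ext m; simp [myLqp_apply, EuclideanSpace.single_apply]
    have e2 : myLzl (EuclideanSpace.single (Sum.inr (Sum.inr j)) 1) = 0 := by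
      ext m; simp [myLzl_apply, EuclideanSpace.single_apply]
    have e3 : myLzm (EuclideanSpace.single (Sum.inr (Sum.inr j)) 1)
        = EuclideanSpace.single j 1 := by
      ext m; simp [myLzm_apply, EuclideanSpace.single_apply]
    simp [e1, e2, e3, cmProj_apply, EuclideanSpace.single_apply,
      ← my_grad_apply, Finset.sum_ite_eq', mul_comm]
  -- now compare the two sides, coordinate by coordinate
  funext k
  rcases k with (((j | j) | (j | j)) | (j | j)) <;>
    simp only [closedLoopField, Fzeta, Bmat, Gam, Matrix.fromBlocks_mulVec,
      Matrix.fromRows_mulVec, Sum.elim_inl, Sum.elim_inr, Pi.add_apply, Function.comp,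
      Matrix.zero_mulVec, Matrix.one_mulVec, Matrix.neg_mulVec, Pi.zero_apply, Pi.neg_apply,
      Function.comp_def, zero_add, add_zero, hql, hqm, hp, hxl, hxm, uSat] <;>
    first
      | rfl
      | ring

end
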